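/- arXiv:0903.3323 — 6 statements merged into one kernel-verified Lean document; each statement's English description precedes it below -/
import Mathlib

section
/- Let X be a nonempty compact subset of ℂ. The map x ↦ χ_x, where χ_x(u) = u(x) for u ∈ R(X), is a homeomorphism from X onto the character space of R(X) (the set of nonzero continuous algebra homomorphisms R(X) → ℂ, equipped with the weak-* topology inherited from the dual of R(X)). -/
/-- The set of restrictions to `X` of rational functions with poles off `X`. -/
def rationalFunctionsOn (X : Set ℂ) : Set C(X, ℂ) :=
  {u | ∃ p q : Polynomial ℂ, (∀ z ∈ X, q.eval z ≠ 0) ∧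
    ∀ z : X, u z = p.eval (z : ℂ) / q.eval (z : ℂ)}

/-- `R(X)`: the closure in `C(X, ℂ)` (sup norm) of the algebra of rational functions with
poles off `X`. -/
noncomputable def RX (X : Set ℂ) [CompactSpace X] : Subalgebra ℂ C(X, ℂ) :=
  (Algebra.adjoin ℂ (rationalFunctionsOn X)).topologicalClosure

/-! A character `φ` of `R(X)` is determined by `w = φ z`, where `z` is the coordinate function.
This `w` lies in the spectrum of `z`, which is contained in `X` because `1 / (c - z)` is a rational
function with pole off `X` for every `c ∉ X`. Writing a generator as `u = p / q` gives
`φ u * q(w) = p(w)`, i.e. `φ u = u(w)`, and by continuity and density `φ` is evaluation at `w`.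
The evaluation map is injective since `z` separates points, and a continuous bijection from a
compact space onto a Hausdorff one is a homeomorphism. -/

theorem AlgHom.ext_topologicalClosure_adjoin {R A B : Type*} [CommSemiring R]
    [TopologicalSpace A] [Semiring A] [Algebra R A] [IsSemitopologicalSemiring A]
    [TopologicalSpace B] [T2Space B] [Semiring B] [Algebra R B] {s : Set A}
    {φ ψ : (Algebra.adjoin R s).topologicalClosure →ₐ[R] B} (hφ : Continuous φ)
    (hψ : Continuous ψ)
    (h : ∀ x (hx : x ∈ s),
      φ ⟨x, (Algebra.adjoin R s).le_topologicalClosure (Algebra.subset_adjoin hx)⟩ =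
        ψ ⟨x, (Algebra.adjoin R s).le_topologicalClosure (Algebra.subset_adjoin hx)⟩) :
    φ = ψ := by
  set ι := Subalgebra.inclusion (Algebra.adjoin R s).le_topologicalClosure
  have hadjoin : φ.comp ι = ψ.comp ι := AlgHom.adjoin_ext h
  have hdense : DenseRange ι :=
    (denseRange_inclusion_iff (Algebra.adjoin R s).le_topologicalClosure).2 subset_rfl
  exact DFunLike.coe_injective <| hdense.equalizer hφ hψ <| congrArg DFunLike.coe hadjoin

namespace WeakDual.CharacterSpace

variable (X 𝕜 : Type*) [TopologicalSpace X] [CommRing 𝕜] [TopologicalSpace 𝕜]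
  [IsTopologicalRing 𝕜] [Nontrivial 𝕜] [NoZeroDivisors 𝕜]

noncomputable def subalgebraEval (A : Subalgebra 𝕜 C(X, 𝕜)) : C(X, characterSpace 𝕜 A) where
  toFun x :=
    ⟨{  toFun := fun f => (f : C(X, 𝕜)) x
        map_add' := fun _ _ => rfl
        map_smul' := fun _ _ => rfl }, by
        rw [CharacterSpace.eq_set_map_one_map_mul]; exact ⟨rfl, fun f g => rfl⟩⟩
  continuous_toFun := by
    refine Continuous.subtype_mk ?_ _
    exact continuous_of_continuous_eval fun f => (f : C(X, 𝕜)).continuous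

theorem subalgebraEval_injective {A : Subalgebra 𝕜 C(X, 𝕜)} (hA : A.SeparatesPoints) :
    Function.Injective (subalgebraEval X 𝕜 A) := by
  intro x y hxy
  by_contra hne
  obtain ⟨_, ⟨f, hf, rfl⟩, hfxy⟩ := hA hne
  exact hfxy (DFunLike.congr_fun hxy ⟨f, hf⟩)

end WeakDual.CharacterSpace

open Polynomial WeakDual CharacterSpace

namespace RX

variable (X : Set ℂ) [CompactSpace X]

theorem rationalFunctionsOn_subset : rationalFunctionsOn X ⊆ RX X :=
  fun _ hu => Subalgebra.le_topologicalClosure _ (Algebra.subset_adjoin hu)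

noncomputable def coordinate : RX X :=
  ⟨(ContinuousMap.id ℂ).restrict X,
    rationalFunctionsOn_subset X ⟨Polynomial.X, 1, by simp, by simp⟩⟩

@[simp]
theorem coordinate_apply (z : X) : (coordinate X : C(X, ℂ)) z = z := rfl

theorem separatesPoints : (RX X).SeparatesPoints :=
  fun _ _ hxy => ⟨_, ⟨coordinate X, (coordinate X).2, rfl⟩, fun h => hxy (Subtype.ext h)⟩

@[simp]
theorem aeval_coordinate_apply (p : ℂ[X]) (z : X) :
    (aeval (coordinate X) p : C(X, ℂ)) z = p.eval (z : ℂ) := by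
  rw [aeval_subalgebra_coe, aeval_continuousMap_apply, coordinate_apply]

theorem isUnit_aeval_coordinate {q : ℂ[X]} (hq : ∀ z ∈ X, q.eval z ≠ 0) :
    IsUnit (aeval (coordinate X) q) := by
  let inv : C(X, ℂ) := ⟨fun z => (q.eval (z : ℂ))⁻¹,
    (q.continuous.comp continuous_subtype_val).inv₀ fun z => hq z z.2⟩
  have hinv : inv ∈ RX X := rationalFunctionsOn_subset X ⟨1, q, hq, fun z => by simp [inv]⟩
  refine IsUnit.of_mul_eq_one ⟨inv, hinv⟩ (Subtype.ext <| ContinuousMap.ext fun z => ?_)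
  simp [inv, mul_inv_cancel₀ (hq z z.2)]

theorem spectrum_coordinate_subset : spectrum ℂ (coordinate X) ⊆ X := by
  intro w hw
  by_contra hwX
  refine spectrum.mem_iff.1 hw ?_
  have hq : ∀ z ∈ X, (C w - Polynomial.X).eval z ≠ 0 := fun z hz => by
    simpa [sub_eq_zero] using (ne_of_mem_of_not_mem hz hwX).symm
  simpa using isUnit_aeval_coordinate X hq

theorem apply_coordinate_mem (φ : characterSpace ℂ (RX X)) : φ (coordinate X) ∈ X :=
  spectrum_coordinate_subset X (apply_mem_spectrum φ _)

theorem eq_subalgebraEval_apply_coordinate (φ : characterSpace ℂ (RX X)) :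
    φ = subalgebraEval X ℂ (RX X) ⟨φ (coordinate X), apply_coordinate_mem X φ⟩ := by
  set x : X := ⟨φ (coordinate X), apply_coordinate_mem X φ⟩
  ext a
  refine DFunLike.congr_fun (AlgHom.ext_topologicalClosure_adjoin (φ := toAlgHom φ)
    (ψ := toAlgHom (subalgebraEval X ℂ (RX X) x)) (toCLM φ).continuous (toCLM _).continuous ?_) a
  rintro u ⟨p, q, hq, hu⟩
  have hu_mem : u ∈ RX X := rationalFunctionsOn_subset X ⟨p, q, hq, hu⟩
  have hmul : (⟨u, hu_mem⟩ : RX X) * aeval (coordinate X) q = aeval (coordinate X) p :=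
    Subtype.ext <| ContinuousMap.ext fun z => by simp [hu, div_mul_cancel₀ _ (hq z z.2)]
  have hφ := congrArg φ hmul
  rw [map_mul, ← aeval_algHom_apply, ← aeval_algHom_apply, coe_aeval_eq_eval] at hφ
  change φ _ = u x
  rw [hu x, eq_div_iff (hq x x.2)]
  exact hφ

end RX

theorem evaluation_homeomorphism_characterSpace_RX_general
    (X : Set ℂ) [CompactSpace X] :
    ∃ h : X ≃ₜ WeakDual.characterSpace ℂ (RX X),
      ∀ (x : X) (u : RX X), (h x : WeakDual ℂ (RX X)) u = (u : C(X, ℂ)) x := by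
  have hinj := subalgebraEval_injective X ℂ (RX.separatesPoints X)
  have hsurj : Function.Surjective (subalgebraEval X ℂ (RX X)) :=
    fun φ => ⟨_, (RX.eq_subalgebraEval_apply_coordinate X φ).symm⟩
  exact ⟨Continuous.homeoOfEquivCompactToT2 (f := Equiv.ofBijective _ ⟨hinj, hsurj⟩)
    (map_continuous (subalgebraEval X ℂ (RX X))), fun _ _ => rfl⟩

/-- For a nonempty compact `X ⊆ ℂ`, evaluation `x ↦ χ_x`, `χ_x(u) = u(x)`, is a homeomorphism
of `X` onto the character space of `R(X)` (nonzero continuous multiplicative linear functionals,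
with the weak-* topology). -/
theorem evaluation_homeomorphism_characterSpace_RX
    (X : Set ℂ) [CompactSpace X] (hX : X.Nonempty) :
    ∃ h : X ≃ₜ WeakDual.characterSpace ℂ (RX X),
      ∀ (x : X) (u : RX X), (h x : WeakDual ℂ (RX X)) u = (u : C(X, ℂ)) x :=
  evaluation_homeomorphism_characterSpace_RX_general X
end

section
/- Let X be a nonempty compact subset of ℂ and for x ∈ X let χ_x denote the evaluation character of R(X), χ_x(u) = u(x), regarded as a continuous linear functional on R(X). The relation on X defined by x ∼ y iff ‖χ_x − χ_y‖ < 2 (the norm being the dual norm on the continuous dual of R(X)) is an equivalence relation; in particular it is transitive: if ‖χ_x − χ_y‖ < 2 and ‖χ_y − χ_z‖ < 2 then ‖χ_x − χ_z‖ < 2. -/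
/-- The evaluation character `χ_x`, `χ_x(u) = u(x)`, as a continuous linear functional
on `R(X)`. -/
noncomputable def evalChar (X : Set ℂ) [CompactSpace X] (x : X) : RX X →L[ℂ] ℂ :=
  LinearMap.mkContinuous
    { toFun := fun u => (u : C(X, ℂ)) x
      map_add' := fun u v => rfl
      map_smul' := fun c u => rfl } 1
    (fun u => by
      rw [one_mul]
      exact ContinuousMap.norm_coe_le_norm (u : C(X, ℂ)) x)

open ComplexConjugate

namespace Complex

theorem norm_one_sub_conj_mul_sq (w a : ℂ) :
    ‖1 - conj a * w‖ ^ 2 = ‖w - a‖ ^ 2 + (1 - ‖a‖ ^ 2) * (1 - ‖w‖ ^ 2) := by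
  simp only [← normSq_eq_norm_sq, normSq_apply, sub_re, sub_im, mul_re, mul_im, conj_re,
    conj_im, one_re, one_im]
  ring

theorem norm_sub_le_norm_one_sub_conj_mul {w a : ℂ} (hw : ‖w‖ ≤ 1) (ha : ‖a‖ ≤ 1) :
    ‖w - a‖ ≤ ‖1 - conj a * w‖ := by
  rw [← sq_le_sq₀ (norm_nonneg _) (norm_nonneg _), norm_one_sub_conj_mul_sq]
  have : 0 ≤ (1 - ‖a‖ ^ 2) * (1 - ‖w‖ ^ 2) :=
    mul_nonneg (by nlinarith [norm_nonneg a]) (by nlinarith [norm_nonneg w])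
  linarith

theorem norm_add_mul_le_mul_norm_one_add_conj_mul {w a : ℂ} {r s : ℝ} (hw : ‖w‖ ≤ r)
    (ha : ‖a‖ ≤ s) (hr : r ≤ 1) (hs : s ≤ 1) :
    ‖w + a‖ * (1 + r * s) ≤ (r + s) * ‖1 + conj a * w‖ := by
  have hr0 : 0 ≤ r := (norm_nonneg w).trans hw
  have hs0 : 0 ≤ s := (norm_nonneg a).trans ha
  have hid := norm_one_sub_conj_mul_sq w (-a)
  simp only [map_neg, neg_mul, sub_neg_eq_add, norm_neg] at hid
  have hden : ‖1 + conj a * w‖ ≤ 1 + r * s := by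
    refine (norm_add_le _ _).trans ?_
    rw [norm_one, norm_mul, norm_conj, mul_comm r]
    gcongr
  have hw2 : ‖w‖ ^ 2 ≤ r ^ 2 := by gcongr
  have ha2 : ‖a‖ ^ 2 ≤ s ^ 2 := by gcongr
  have hr2 : r ^ 2 ≤ 1 := pow_le_one₀ hr0 hr
  have hs2 : s ^ 2 ≤ 1 := pow_le_one₀ hs0 hs
  have hfac : (1 - r ^ 2) * (1 - s ^ 2) ≤ (1 - ‖w‖ ^ 2) * (1 - ‖a‖ ^ 2) :=
    mul_le_mul (by linarith) (by linarith) (by linarith) (by linarith)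
  have hprod : (1 - r ^ 2) * (1 - s ^ 2) * ‖1 + conj a * w‖ ^ 2
      ≤ (1 - ‖w‖ ^ 2) * (1 - ‖a‖ ^ 2) * (1 + r * s) ^ 2 :=
    mul_le_mul hfac (pow_le_pow_left₀ (norm_nonneg _) hden 2) (sq_nonneg _)
      (mul_nonneg (by linarith) (by linarith))
  rw [← sq_le_sq₀ (by positivity) (by positivity)]
  linear_combination hprod - (1 + r * s) ^ 2 * hid

end Complex

section

variable {X : Type*} [TopologicalSpace X] [CompactSpace X] {A : Subalgebra ℂ C(X, ℂ)}
  {x y z : X}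

theorem Subalgebra.exists_mem_blaschke_comp (hA : IsClosed (A : Set C(X, ℂ))) {f : C(X, ℂ)}
    (hf : f ∈ A) (hf1 : ‖f‖ ≤ 1) {a : ℂ} (ha : ‖a‖ < 1) :
    ∃ g ∈ A, ‖g‖ ≤ 1 ∧ ∀ z, g z * (1 - conj a * f z) = f z - a := by
  have : CompleteSpace A := hA.completeSpace_coe
  have hfz : ∀ z, ‖f z‖ ≤ 1 := fun z => (f.norm_coe_le_norm z).trans hf1
  let b : A := ⟨conj a • f, A.smul_mem hf _⟩
  have hb : ‖b‖ < 1 :=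
    calc ‖b‖ = ‖conj a • f‖ := rfl
      _ = ‖a‖ * ‖f‖ := by rw [norm_smul, RCLike.norm_conj]
      _ < 1 := by nlinarith [norm_nonneg a, norm_nonneg f]
  let g : A := (⟨f, hf⟩ - algebraMap ℂ A a) * ↑(Units.oneSub b hb)⁻¹
  have hg : ∀ z, (g : C(X, ℂ)) z * (1 - conj a * f z) = f z - a := by
    intro z
    have h : g * (1 - b) = ⟨f, hf⟩ - algebraMap ℂ A a := by
      rw [← Units.val_oneSub b hb, Units.inv_mul_cancel_right]
    simpa [b] using congrArg (fun v : A => (v : C(X, ℂ)) z) h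
  refine ⟨g, g.2, (ContinuousMap.norm_le _ zero_le_one).2 fun z => ?_, hg⟩
  have hden : 0 < ‖1 - conj a * f z‖ := by
    have : ‖conj a * f z‖ < 1 := by
      rw [norm_mul, RCLike.norm_conj]; nlinarith [norm_nonneg a, norm_nonneg (f z), hfz z]
    linarith [norm_sub_norm_le (1 : ℂ) (conj a * f z), norm_one (α := ℂ)]
  refine le_of_mul_le_mul_right ?_ hden
  rw [← norm_mul, hg, one_mul]
  exact Complex.norm_sub_le_norm_one_sub_conj_mul (hfz z) ha.le

theorem Subalgebra.exists_mem_blaschke_comp_eq_zero (hA : IsClosed (A : Set C(X, ℂ)))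
    {f : C(X, ℂ)} (hf : f ∈ A) (hf1 : ‖f‖ ≤ 1) {y : X} (hy : ‖f y‖ < 1) :
    ∃ g ∈ A, ‖g‖ ≤ 1 ∧ g y = 0 ∧ ∀ z, g z * (1 - conj (f y) * f z) = f z - f y := by
  obtain ⟨g, hgA, hg1, hg⟩ := exists_mem_blaschke_comp hA hf hf1 hy
  refine ⟨g, hgA, hg1, ?_, hg⟩
  have hden : 1 - conj (f y) * f y ≠ 0 := by
    rw [Complex.conj_mul', sub_ne_zero]
    exact_mod_cast (pow_lt_one₀ (norm_nonneg _) hy two_ne_zero).ne'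
  simpa [hden] using hg y

/-- `PseudoHyperbolicLE A x y c` says that the Gleason pseudo-hyperbolic distance
`sup {‖f x‖ | f ∈ A, ‖f‖ ≤ 1, f y = 0}` is at most `c`. -/
def PseudoHyperbolicLE (A : Subalgebra ℂ C(X, ℂ)) (x y : X) (c : ℝ) : Prop :=
  ∀ f ∈ A, ‖f‖ ≤ 1 → f y = 0 → ‖f x‖ ≤ c

namespace PseudoHyperbolicLE

variable {c c₁ c₂ : ℝ}

theorem nonneg (h : PseudoHyperbolicLE A x y c) : 0 ≤ c := by
  simpa using h 0 A.zero_mem (by simp) rfl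

theorem norm_sub_le (hA : IsClosed (A : Set C(X, ℂ))) (h : PseudoHyperbolicLE A x y c)
    {f : C(X, ℂ)} (hf : f ∈ A) (hf1 : ‖f‖ < 1) : ‖f x - f y‖ ≤ 2 * c := by
  obtain ⟨g, hgA, hg1, hgy, hg⟩ := A.exists_mem_blaschke_comp_eq_zero hA hf hf1.le
    ((f.norm_coe_le_norm y).trans_lt hf1)
  have hden : ‖1 - conj (f y) * f x‖ ≤ 2 := by
    refine (_root_.norm_sub_le _ _).trans ?_
    rw [norm_one, norm_mul, RCLike.norm_conj]
    have := mul_le_one₀ ((f.norm_coe_le_norm y).trans hf1.le) (norm_nonneg _)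
      ((f.norm_coe_le_norm x).trans hf1.le)
    linarith
  rw [← hg x, norm_mul, mul_comm 2 c]
  exact mul_le_mul (h g hgA hg1 hgy) hden (norm_nonneg _) h.nonneg

theorem trans (hA : IsClosed (A : Set C(X, ℂ))) (hxy : PseudoHyperbolicLE A x y c₁)
    (hyz : PseudoHyperbolicLE A y z c₂) (hc₁ : c₁ ≤ 1) (hc₂ : c₂ < 1) :
    PseudoHyperbolicLE A x z ((c₁ + c₂) / (1 + c₁ * c₂)) := by
  intro f hf hf1 hfz
  have hfy : ‖f y‖ ≤ c₂ := hyz f hf hf1 hfz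
  obtain ⟨g, hgA, hg1, hgy, hg⟩ :=
    A.exists_mem_blaschke_comp_eq_zero hA hf hf1 (hfy.trans_lt hc₂)
  have hgx : ‖g x‖ ≤ c₁ := hxy g hgA hg1 hgy
  have hinv : f x * (1 + conj (f y) * g x) = g x + f y := by linear_combination -hg x
  have hden : 0 < ‖1 + conj (f y) * g x‖ := by
    have : ‖conj (f y) * g x‖ < 1 := by
      rw [norm_mul, RCLike.norm_conj]
      nlinarith [norm_nonneg (f y), norm_nonneg (g x), hxy.nonneg]
    have h1 := norm_sub_norm_le (1 : ℂ) (-(conj (f y) * g x))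
    rw [sub_neg_eq_add, norm_neg, norm_one] at h1
    linarith
  have hc : 0 < 1 + c₁ * c₂ := by nlinarith [hxy.nonneg, hyz.nonneg]
  rw [le_div_iff₀ hc]
  refine le_of_mul_le_mul_right ?_ hden
  calc ‖f x‖ * (1 + c₁ * c₂) * ‖1 + conj (f y) * g x‖
      = ‖g x + f y‖ * (1 + c₁ * c₂) := by rw [← hinv, norm_mul]; ring
    _ ≤ (c₁ + c₂) * ‖1 + conj (f y) * g x‖ :=
      Complex.norm_add_mul_le_mul_norm_one_add_conj_mul hgx hfy hc₁ hc₂.le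

end PseudoHyperbolicLE

theorem pseudoHyperbolicLE_of_norm_sub_le (hA : IsClosed (A : Set C(X, ℂ))) {t : ℝ}
    (ht₀ : 0 ≤ t) (ht₁ : t < 1) (h : ∀ f ∈ A, ‖f‖ ≤ 1 → ‖f x - f y‖ ≤ 2 * t) :
    PseudoHyperbolicLE A x y (2 * t / (1 + t ^ 2)) := by
  intro f hf hf1 hfy
  obtain ⟨u, hu, hux⟩ := Complex.exists_norm_eq_mul_self (f x)
  set ρ := ‖f x‖
  have hρ₀ : 0 ≤ ρ := norm_nonneg _
  have hρ₁ : ρ ≤ 1 := (f.norm_coe_le_norm x).trans hf1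
  obtain ⟨g, hgA, hg1, hg⟩ := A.exists_mem_blaschke_comp hA (A.smul_mem hf u)
    (by rwa [norm_smul, hu, one_mul]) (a := t)
    (by rwa [Complex.norm_real, Real.norm_of_nonneg ht₀])
  have hgy : g y = -t := by simpa [hfy] using hg y
  have hgx : g x * (1 - t * ρ) = ρ - t := by simpa [← hux] using hg x
  have key : (g x - g y) * ((1 - t * ρ : ℝ) : ℂ) = ((ρ * (1 - t ^ 2) : ℝ) : ℂ) := by
    push_cast; rw [hgy]; linear_combination hgx
  have hd : 0 ≤ 1 - t * ρ := by nlinarith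
  have hbound : ρ * (1 - t ^ 2) ≤ 2 * t * (1 - t * ρ) := by
    calc ρ * (1 - t ^ 2) = ‖g x - g y‖ * (1 - t * ρ) := by
          rw [← Real.norm_of_nonneg hd, ← Complex.norm_real, ← norm_mul, key, Complex.norm_real,
            Real.norm_of_nonneg (mul_nonneg hρ₀ (by nlinarith))]
      _ ≤ 2 * t * (1 - t * ρ) := by gcongr; exact h g hgA hg1
  rw [le_div_iff₀ (by positivity)]
  linarith

end

theorem isClosed_RX (X : Set ℂ) [CompactSpace X] : IsClosed (RX X : Set C(X, ℂ)) :=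
  Subalgebra.isClosed_topologicalClosure _

theorem norm_evalChar_sub_lt_two_iff {X : Set ℂ} [CompactSpace X] (x y : X) :
    ‖evalChar X x - evalChar X y‖ < 2 ↔ ∃ c < 1, PseudoHyperbolicLE (RX X) x y c := by
  constructor
  · intro h
    set t := ‖evalChar X x - evalChar X y‖ / 2 with ht
    have ht₀ : 0 ≤ t := by positivity
    refine ⟨2 * t / (1 + t ^ 2), ?_, pseudoHyperbolicLE_of_norm_sub_le (isClosed_RX X) ht₀
      (by linarith) fun f hf hf1 => ?_⟩
    · rw [div_lt_one (by positivity)]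
      nlinarith [sq_pos_of_pos (show 0 < 1 - t by linarith)]
    · calc ‖f x - f y‖ = ‖(evalChar X x - evalChar X y) ⟨f, hf⟩‖ := rfl
        _ ≤ ‖evalChar X x - evalChar X y‖ * ‖f‖ := (evalChar X x - evalChar X y).le_opNorm _
        _ ≤ 2 * t := by nlinarith [norm_nonneg (evalChar X x - evalChar X y)]
  · rintro ⟨c, hc₁, hc⟩
    suffices ‖evalChar X x - evalChar X y‖ ≤ 2 * c by linarith
    refine le_of_not_gt fun hlt => ?_
    obtain ⟨u, hu, hcu⟩ := (evalChar X x - evalChar X y).exists_lt_apply_of_lt_opNorm hlt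
    exact hcu.not_ge (hc.norm_sub_le (isClosed_RX X) u.2 hu)

theorem gleason_relation_equivalence_general (X : Set ℂ) [CompactSpace X] :
    Equivalence (fun x y : X => ‖evalChar X x - evalChar X y‖ < 2) ∧
    (∀ x y z : X, ‖evalChar X x - evalChar X y‖ < 2 → ‖evalChar X y - evalChar X z‖ < 2 →
      ‖evalChar X x - evalChar X z‖ < 2) := by
  have htrans : ∀ x y z : X, ‖evalChar X x - evalChar X y‖ < 2 →
      ‖evalChar X y - evalChar X z‖ < 2 → ‖evalChar X x - evalChar X z‖ < 2 := by
    simp only [norm_evalChar_sub_lt_two_iff]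
    rintro x y z ⟨c₁, hc₁, hxy⟩ ⟨c₂, hc₂, hyz⟩
    refine ⟨_, ?_, hxy.trans (isClosed_RX X) hyz hc₁.le hc₂⟩
    have := hxy.nonneg
    have := hyz.nonneg
    rw [div_lt_one (by positivity)]
    nlinarith
  refine ⟨⟨fun x => ?_, fun {x y} h => ?_, htrans _ _ _⟩, htrans⟩
  · rw [sub_self (evalChar X x), ContinuousLinearMap.opNorm_zero]
    exact zero_lt_two
  · exact (norm_sub_rev (evalChar X y) (evalChar X x)).trans_lt h

/-- The Gleason relation `x ∼ y ⟺ ‖χ_x − χ_y‖ < 2` on a compact `X ⊆ ℂ` (the norm being the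
dual norm on the dual of `R(X)`) is an equivalence relation; in particular it is transitive. -/
theorem gleason_relation_equivalence (X : Set ℂ) [CompactSpace X] (hX : X.Nonempty) :
    Equivalence (fun x y : X => ‖evalChar X x - evalChar X y‖ < 2) ∧
    (∀ x y z : X, ‖evalChar X x - evalChar X y‖ < 2 → ‖evalChar X y - evalChar X z‖ < 2 →
      ‖evalChar X x - evalChar X z‖ < 2) :=
  gleason_relation_equivalence_general X
end

section
/- Let X be a nonempty compact subset of ℂ, Φ a representation of R(X) on a complex Hilbert space H, and (μ_{f,g})_{f,g ∈ H} a system of elementary spectral measures of Φ. Let Q be a continuous linear projection on M(X) having property R. Then there exists a map Φ_Q : R(X) → B(H), linear and multiplicative (Φ_Q(uv) = Φ_Q(u)Φ_Q(v)), such that ⟨Φ_Q(u)f, g⟩ = (Q μ_{f,g})(u) for all u ∈ R(X) and f, g ∈ H; moreover P_Q := Φ_Q(1) is an idempotent (P_Q² = P_Q) satisfying P_Q Φ(u) = Φ(u) P_Q = Φ_Q(u) for all u ∈ R(X). -/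
open scoped InnerProductSpace ComplexConjugate

/-- `M(X)`: the continuous dual of `C(X, ℂ)`; by the Riesz representation theorem its members
are (identified with) the regular complex Borel measures on `X`. -/
abbrev MX (X : Set ℂ) [CompactSpace X] := C(X, ℂ) →L[ℂ] ℂ

/-- The module action of `C(X, ℂ)` on `M(X)`: `(u·L)(v) = L(uv)`. -/
noncomputable def cdot (X : Set ℂ) [CompactSpace X] (u : C(X, ℂ)) (L : MX X) : MX X :=
  L.comp (ContinuousLinearMap.mul ℂ C(X, ℂ) u)

/-- Property R (after F. and M. Riesz) for an operator `Q` on `M(X)`: `Q` maps the annihilator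
of `R(X)` into itself and commutes with the action of `C(X, ℂ)`. -/
def HasPropertyR (X : Set ℂ) [CompactSpace X] (Q : MX X →L[ℂ] MX X) : Prop :=
  (∀ L : MX X, (∀ u : RX X, L (u : C(X, ℂ)) = 0) → ∀ u : RX X, Q L (u : C(X, ℂ)) = 0) ∧
  (∀ (u : C(X, ℂ)) (L : MX X), Q (cdot X u L) = cdot X u (Q L))

/-- A system of elementary spectral measures of a representation `Φ` of `R(X)` on a complex
Hilbert space `H`: a family `(μ_{f,g})` in `M(X)`, linear in `f`, conjugate-linear in `g`,
with `μ_{f,g}(u) = ⟨Φ(u)f, g⟩` on `R(X)` and `‖μ_{f,g}‖ ≤ C‖f‖‖g‖` where `C` also bounds `Φ`. -/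
structure ElemSpectralMeasures (X : Set ℂ) [CompactSpace X] {H : Type*}
    [NormedAddCommGroup H] [InnerProductSpace ℂ H]
    (Φ : RX X →ₐ[ℂ] (H →L[ℂ] H)) where
  μ : H → H → MX X
  add_left : ∀ f f' g, μ (f + f') g = μ f g + μ f' g
  smul_left : ∀ (c : ℂ) f g, μ (c • f) g = c • μ f g
  add_right : ∀ f g g', μ f (g + g') = μ f g + μ f g'
  smul_right : ∀ (c : ℂ) f g, μ f (c • g) = (conj c) • μ f g
  repr : ∀ (u : RX X) (f g : H), μ f g (u : C(X, ℂ)) = ⟪g, Φ u f⟫_ℂ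
  bound : ∃ C : ℝ, (∀ u : RX X, ‖Φ u‖ ≤ C * ‖u‖) ∧ ∀ f g, ‖μ f g‖ ≤ C * ‖f‖ * ‖g‖

set_option maxHeartbeats 1000000 in
/-- Given a representation `Φ` of `R(X)` with elementary spectral measures `(μ_{f,g})` and a
continuous linear projection `Q` on `M(X)` with property R, the `Q`-part `Φ_Q` of `Φ` exists:
a linear multiplicative map with `⟨Φ_Q(u)f, g⟩ = (Qμ_{f,g})(u)`, and `P_Q = Φ_Q(1)` is an
idempotent commuting with the range of `Φ`, with `P_QΦ(u) = Φ(u)P_Q = Φ_Q(u)`. -/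
theorem exists_Q_part
    (X : Set ℂ) [CompactSpace X] (hX : X.Nonempty)
    {H : Type*} [NormedAddCommGroup H] [InnerProductSpace ℂ H] [CompleteSpace H]
    (Φ : RX X →ₐ[ℂ] (H →L[ℂ] H)) (E : ElemSpectralMeasures X Φ)
    (Q : MX X →L[ℂ] MX X) (hQ : Q ∘L Q = Q) (hQR : HasPropertyR X Q) :
    ∃ ΦQ : RX X → (H →L[ℂ] H),
      (∀ u v : RX X, ΦQ (u + v) = ΦQ u + ΦQ v) ∧
      (∀ (c : ℂ) (u : RX X), ΦQ (c • u) = c • ΦQ u) ∧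
      (∀ u v : RX X, ΦQ (u * v) = ΦQ u ∘L ΦQ v) ∧
      (∀ (u : RX X) (f g : H), ⟪g, ΦQ u f⟫_ℂ = Q (E.μ f g) (u : C(X, ℂ))) ∧
      (ΦQ 1 ∘L ΦQ 1 = ΦQ 1) ∧
      (∀ u : RX X, ΦQ 1 ∘L Φ u = ΦQ u ∧ Φ u ∘L ΦQ 1 = ΦQ u) := by
  classical
  set_option maxHeartbeats 1000000 in
  obtain ⟨C, hΦC, hμC⟩ := E.bound
  set C' := max C 0 with hC'def
  have hC0 : (0:ℝ) ≤ C' := le_max_right _ _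
  have hμC' : ∀ f g : H, ‖E.μ f g‖ ≤ C' * ‖f‖ * ‖g‖ := by
    intro f g
    exact (hμC f g).trans (mul_le_mul_of_nonneg_right
      (mul_le_mul_of_nonneg_right (le_max_left _ _) (norm_nonneg _)) (norm_nonneg _))
  -- bound on Q μ evaluated at u
  have hbound : ∀ (u : RX X) (f g : H),
      ‖Q (E.μ f g) (u : C(X, ℂ))‖ ≤ ‖Q‖ * C' * ‖(u : C(X, ℂ))‖ * ‖f‖ * ‖g‖ := by
    intro u f g
    calc ‖Q (E.μ f g) (u : C(X, ℂ))‖ ≤ ‖Q (E.μ f g)‖ * ‖(u : C(X, ℂ))‖ :=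
          (Q (E.μ f g)).le_opNorm _
      _ ≤ (‖Q‖ * ‖E.μ f g‖) * ‖(u : C(X, ℂ))‖ :=
          mul_le_mul_of_nonneg_right (Q.le_opNorm _) (norm_nonneg _)
      _ ≤ (‖Q‖ * (C' * ‖f‖ * ‖g‖)) * ‖(u : C(X, ℂ))‖ :=
          mul_le_mul_of_nonneg_right
            (mul_le_mul_of_nonneg_left (hμC' f g) (norm_nonneg Q)) (norm_nonneg _)
      _ = ‖Q‖ * C' * ‖(u : C(X, ℂ))‖ * ‖f‖ * ‖g‖ := by ring
  -- construction of the operator for each u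
  have main : ∀ u : RX X, ∃ T : H →L[ℂ] H,
      ∀ f g : H, ⟪g, T f⟫_ℂ = Q (E.μ f g) (u : C(X, ℂ)) := by
    intro u
    set K : ℝ := ‖Q‖ * C' * ‖(u : C(X, ℂ))‖ with hK
    have hK0 : 0 ≤ K := by rw [hK]; positivity
    let ℓ : H → (H →L[ℂ] ℂ) := fun f =>
      LinearMap.mkContinuous
        { toFun := fun g => conj (Q (E.μ f g) (u : C(X, ℂ)))
          map_add' := by
            intro g g'
            simp only [E.add_right, map_add, ContinuousLinearMap.add_apply]
          map_smul' := by
            intro c g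
            simp only [E.smul_right, map_smul, ContinuousLinearMap.smul_apply,
              smul_eq_mul, map_mul, Complex.conj_conj, RingHom.id_apply] }
        (K * ‖f‖)
        (by
          intro g
          have hb := hbound u f g
          rw [← hK] at hb
          simpa [mul_assoc, RCLike.norm_conj] using hb)
    have hℓ : ∀ f g, ℓ f g = conj (Q (E.μ f g) (u : C(X, ℂ))) := fun f g => rfl
    have hℓnorm : ∀ f, ‖ℓ f‖ ≤ K * ‖f‖ := fun f =>
      LinearMap.mkContinuous_norm_le _ (by positivity) _
    let T0 : H → H := fun f => (InnerProductSpace.toDual ℂ H).symm (ℓ f)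
    have hT0 : ∀ f g, ⟪g, T0 f⟫_ℂ = Q (E.μ f g) (u : C(X, ℂ)) := by
      intro f g
      have h1 : ⟪T0 f, g⟫_ℂ = ℓ f g := InnerProductSpace.toDual_symm_apply
      calc ⟪g, T0 f⟫_ℂ = conj ⟪T0 f, g⟫_ℂ := (inner_conj_symm _ _).symm
        _ = conj (conj (Q (E.μ f g) (u : C(X, ℂ)))) := by rw [h1, hℓ]
        _ = Q (E.μ f g) (u : C(X, ℂ)) := by simp
    have hadd : ∀ f f', T0 (f + f') = T0 f + T0 f' := by
      intro f f'
      refine ext_inner_left ℂ fun g => ?_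
      rw [inner_add_right, hT0, hT0, hT0, E.add_left, map_add,
        ContinuousLinearMap.add_apply]
    have hsmul : ∀ (c : ℂ) f, T0 (c • f) = c • T0 f := by
      intro c f
      refine ext_inner_left ℂ fun g => ?_
      rw [inner_smul_right, hT0, hT0, E.smul_left, map_smul,
        ContinuousLinearMap.smul_apply, smul_eq_mul]
    have hTnorm : ∀ f, ‖T0 f‖ ≤ K * ‖f‖ := by
      intro f
      have : ‖T0 f‖ = ‖ℓ f‖ := (InnerProductSpace.toDual ℂ H).symm.norm_map _
      rw [this]; exact hℓnorm f
    exact ⟨LinearMap.mkContinuous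
      { toFun := T0, map_add' := hadd, map_smul' := hsmul } K hTnorm, hT0⟩
  choose ΦQ hΦQ using main
  -- uniqueness helper
  have uniq : ∀ (A B : H →L[ℂ] H), (∀ f g : H, ⟪g, A f⟫_ℂ = ⟪g, B f⟫_ℂ) → A = B := by
    intro A B h
    ext f
    exact ext_inner_left ℂ fun g => h f g
  -- annihilator transfer
  have hAnn : ∀ L₁ L₂ : MX X, (∀ v : RX X, L₁ (v : C(X, ℂ)) = L₂ (v : C(X, ℂ))) →
      ∀ v : RX X, Q L₁ (v : C(X, ℂ)) = Q L₂ (v : C(X, ℂ)) := by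
    intro L₁ L₂ h v
    have h0 : ∀ w : RX X, (L₁ - L₂) (w : C(X, ℂ)) = 0 := by
      intro w
      simp [ContinuousLinearMap.sub_apply, h w]
    have h1 := hQR.1 (L₁ - L₂) h0 v
    rw [map_sub] at h1
    simpa [ContinuousLinearMap.sub_apply, sub_eq_zero] using h1
  have hcdot : ∀ (u : C(X, ℂ)) (L : MX X) (v : C(X, ℂ)), cdot X u L v = L (u * v) := by
    intro u L v
    rfl
  have hQQ : ∀ L : MX X, Q (Q L) = Q L := by
    intro L
    have := congrArg (fun T : MX X →L[ℂ] MX X => T L) hQ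
    simpa using this
  -- Relation 1: Φ u ∘ ΦQ v
  have rel1 : ∀ (u v : RX X) (f g : H),
      ⟪g, Φ u (ΦQ v f)⟫_ℂ = Q (E.μ f g) ((u * v : RX X) : C(X, ℂ)) := by
    intro u v f g
    have h1 : ⟪g, Φ u (ΦQ v f)⟫_ℂ = ⟪ContinuousLinearMap.adjoint (Φ u) g, ΦQ v f⟫_ℂ :=
      (ContinuousLinearMap.adjoint_inner_left (Φ u) (ΦQ v f) g).symm
    rw [h1, hΦQ]
    have h2 : ∀ w : RX X, E.μ f (ContinuousLinearMap.adjoint (Φ u) g) (w : C(X, ℂ)) =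
        cdot X (u : C(X, ℂ)) (E.μ f g) (w : C(X, ℂ)) := by
      intro w
      rw [E.repr, ContinuousLinearMap.adjoint_inner_left, hcdot]
      have : (u : C(X, ℂ)) * (w : C(X, ℂ)) = ((u * w : RX X) : C(X, ℂ)) := rfl
      rw [this, E.repr, map_mul, ContinuousLinearMap.mul_apply]
    have h3 := hAnn _ _ h2 v
    rw [h3, hQR.2, hcdot]
    rfl
  -- Relation 2: ΦQ u ∘ Φ v
  have rel2 : ∀ (u v : RX X) (f g : H),
      ⟪g, ΦQ u (Φ v f)⟫_ℂ = Q (E.μ f g) ((u * v : RX X) : C(X, ℂ)) := by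
    intro u v f g
    rw [hΦQ]
    have h2 : ∀ w : RX X, E.μ (Φ v f) g (w : C(X, ℂ)) =
        cdot X (v : C(X, ℂ)) (E.μ f g) (w : C(X, ℂ)) := by
      intro w
      rw [E.repr, hcdot]
      have : (v : C(X, ℂ)) * (w : C(X, ℂ)) = ((w * v : RX X) : C(X, ℂ)) := by
        show (v : C(X, ℂ)) * (w : C(X, ℂ)) = (w : C(X, ℂ)) * (v : C(X, ℂ))
        ring
      rw [this, E.repr, map_mul, ContinuousLinearMap.mul_apply]
    have h3 := hAnn _ _ h2 u
    rw [h3, hQR.2, hcdot]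
    show Q (E.μ f g) ((v : C(X, ℂ)) * (u : C(X, ℂ))) = _
    rw [mul_comm]
    rfl
  -- Relation 3: ΦQ u ∘ ΦQ v
  have rel3 : ∀ (u v : RX X) (f g : H),
      ⟪g, ΦQ u (ΦQ v f)⟫_ℂ = Q (E.μ f g) ((u * v : RX X) : C(X, ℂ)) := by
    intro u v f g
    rw [hΦQ]
    have h2 : ∀ w : RX X, E.μ (ΦQ v f) g (w : C(X, ℂ)) =
        cdot X (v : C(X, ℂ)) (Q (E.μ f g)) (w : C(X, ℂ)) := by
      intro w
      rw [E.repr, rel1, hcdot]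
      show Q (E.μ f g) ((w : C(X, ℂ)) * (v : C(X, ℂ))) =
        Q (E.μ f g) ((v : C(X, ℂ)) * (w : C(X, ℂ)))
      rw [mul_comm]
    have h3 := hAnn _ _ h2 u
    rw [h3, hQR.2, hQQ, hcdot]
    show Q (E.μ f g) ((v : C(X, ℂ)) * (u : C(X, ℂ))) = _
    rw [mul_comm]
    rfl
  refine ⟨ΦQ, ?_, ?_, ?_, hΦQ, ?_, ?_⟩
  · intro u v
    refine uniq _ _ fun f g => ?_
    rw [hΦQ, ContinuousLinearMap.add_apply, inner_add_right, hΦQ, hΦQ]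
    show Q (E.μ f g) ((u : C(X, ℂ)) + (v : C(X, ℂ))) = _
    rw [map_add]
  · intro c u
    refine uniq _ _ fun f g => ?_
    rw [hΦQ, ContinuousLinearMap.smul_apply, inner_smul_right, hΦQ]
    show Q (E.μ f g) (c • (u : C(X, ℂ))) = _
    rw [map_smul, smul_eq_mul]
  · intro u v
    refine uniq _ _ fun f g => ?_
    rw [hΦQ, ContinuousLinearMap.comp_apply, rel3]
  · refine uniq _ _ fun f g => ?_
    rw [ContinuousLinearMap.comp_apply, rel3, one_mul, hΦQ]
  · intro u
    constructor
    · refine uniq _ _ fun f g => ?_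
      rw [ContinuousLinearMap.comp_apply, rel2, one_mul, hΦQ]
    · refine uniq _ _ fun f g => ?_
      rw [ContinuousLinearMap.comp_apply, rel1, mul_one, hΦQ]
end

section
/- Let X be a nonempty compact subset of ℂ, Φ a representation of R(X) on a complex Hilbert space H, and (μ_{f,g})_{f,g ∈ H} a system of elementary spectral measures of Φ. Let Q₁ and Q₂ be continuous linear projections on M(X), each having property R, with Q₁ Q₂ = Q₂ Q₁ = 0, and let P₁, P₂ ∈ B(H) be the operators determined by ⟨P_i f, g⟩ = (Q_i μ_{f,g})(1) for all f, g ∈ H (i = 1, 2). Then P₁ P₂ = P₂ P₁ = 0. -/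
open scoped InnerProductSpace ComplexConjugate

/-- Auxiliary lemma: one of the two compositions vanishes. -/
theorem aux_PQ_zero
    (X : Set ℂ) [CompactSpace X]
    {H : Type*} [NormedAddCommGroup H] [InnerProductSpace ℂ H] [CompleteSpace H]
    (Φ : RX X →ₐ[ℂ] (H →L[ℂ] H)) (E : ElemSpectralMeasures X Φ)
    (Q₁ Q₂ : MX X →L[ℂ] MX X)
    (hR₁ : HasPropertyR X Q₁) (hR₂ : HasPropertyR X Q₂)
    (h12 : Q₁ ∘L Q₂ = 0)
    (P₁ P₂ : H →L[ℂ] H)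
    (hP₁ : ∀ f g : H, ⟪g, P₁ f⟫_ℂ = Q₁ (E.μ f g) (1 : C(X, ℂ)))
    (hP₂ : ∀ f g : H, ⟪g, P₂ f⟫_ℂ = Q₂ (E.μ f g) (1 : C(X, ℂ))) :
    P₁ ∘L P₂ = 0 := by
  -- Key identity: μ_{P₂ f, g} agrees with Q₂ μ_{f,g} on R(X).
  have key : ∀ (u : RX X) (f g : H),
      E.μ (P₂ f) g (u : C(X, ℂ)) = Q₂ (E.μ f g) (u : C(X, ℂ)) := by
    intro u f g
    set A := ContinuousLinearMap.adjoint (Φ u) with hA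
    have h1 : ∀ v : RX X,
        (E.μ f (A g) - cdot X (u : C(X, ℂ)) (E.μ f g)) ((v : C(X, ℂ))) = 0 := by
      intro v
      have e1 : E.μ f (A g) (v : C(X, ℂ)) = ⟪g, Φ u (Φ v f)⟫_ℂ := by
        rw [E.repr v f (A g), hA, ContinuousLinearMap.adjoint_inner_left]
      have e2 : cdot X (u : C(X, ℂ)) (E.μ f g) (v : C(X, ℂ))
          = ⟪g, Φ u (Φ v f)⟫_ℂ := by
        have hc : ((u : C(X, ℂ)) * (v : C(X, ℂ))) = ((u * v : RX X) : C(X, ℂ)) := rfl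
        simp only [cdot, ContinuousLinearMap.comp_apply,
          ContinuousLinearMap.mul_apply', hc, E.repr (u * v) f g, map_mul,
          ContinuousLinearMap.mul_apply]
      simp [ContinuousLinearMap.sub_apply, e1, e2]
    have h2 := hR₂.1 _ h1 1
    simp only [map_sub, ContinuousLinearMap.sub_apply, sub_eq_zero,
      OneMemClass.coe_one] at h2
    have e3 : Q₂ (E.μ f (A g)) (1 : C(X, ℂ)) = E.μ (P₂ f) g (u : C(X, ℂ)) := by
      rw [← hP₂ f (A g), hA, ContinuousLinearMap.adjoint_inner_left,
        E.repr u (P₂ f) g]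
    have e4 : Q₂ (cdot X (u : C(X, ℂ)) (E.μ f g)) (1 : C(X, ℂ))
        = Q₂ (E.μ f g) (u : C(X, ℂ)) := by
      rw [hR₂.2]
      simp [cdot, ContinuousLinearMap.mul_apply']
    rw [← e3, ← e4, h2]
  -- The difference annihilates R(X); apply property R of Q₁ and Q₁Q₂ = 0.
  have h5 : ∀ f g : H, Q₁ (E.μ (P₂ f) g) (1 : C(X, ℂ)) = 0 := by
    intro f g
    have h4 : ∀ v : RX X,
        (E.μ (P₂ f) g - Q₂ (E.μ f g)) ((v : C(X, ℂ))) = 0 := by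
      intro v
      simp [ContinuousLinearMap.sub_apply, key v f g]
    have h6 := hR₁.1 _ h4 1
    have hz : Q₁ (Q₂ (E.μ f g)) = 0 := by
      have := congrArg (fun T : MX X →L[ℂ] MX X => T (E.μ f g)) h12
      simpa using this
    simpa [map_sub, ContinuousLinearMap.sub_apply, hz, sub_eq_zero,
      OneMemClass.coe_one] using h6
  ext f
  have hz : ∀ g : H, ⟪g, P₁ (P₂ f)⟫_ℂ = 0 := fun g => by
    rw [hP₁ (P₂ f) g, h5 f g]
  have := hz (P₁ (P₂ f))
  simpa [inner_self_eq_zero] using this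

/-- If `Q₁, Q₂` are continuous linear projections on `M(X)` with property R and
`Q₁Q₂ = Q₂Q₁ = 0`, then the associated operators `P₁, P₂` (determined by
`⟨P_i f, g⟩ = (Q_i μ_{f,g})(1)`) satisfy `P₁P₂ = P₂P₁ = 0`. -/
theorem Q_parts_orthogonal
    (X : Set ℂ) [CompactSpace X] (hX : X.Nonempty)
    {H : Type*} [NormedAddCommGroup H] [InnerProductSpace ℂ H] [CompleteSpace H]
    (Φ : RX X →ₐ[ℂ] (H →L[ℂ] H)) (E : ElemSpectralMeasures X Φ)
    (Q₁ Q₂ : MX X →L[ℂ] MX X)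
    (hQ₁ : Q₁ ∘L Q₁ = Q₁) (hQ₂ : Q₂ ∘L Q₂ = Q₂)
    (hR₁ : HasPropertyR X Q₁) (hR₂ : HasPropertyR X Q₂)
    (h12 : Q₁ ∘L Q₂ = 0) (h21 : Q₂ ∘L Q₁ = 0)
    (P₁ P₂ : H →L[ℂ] H)
    (hP₁ : ∀ f g : H, ⟪g, P₁ f⟫_ℂ = Q₁ (E.μ f g) (1 : C(X, ℂ)))
    (hP₂ : ∀ f g : H, ⟪g, P₂ f⟫_ℂ = Q₂ (E.μ f g) (1 : C(X, ℂ))) :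
    P₁ ∘L P₂ = 0 ∧ P₂ ∘L P₁ = 0 :=
  ⟨aux_PQ_zero X Φ E Q₁ Q₂ hR₁ hR₂ h12 P₁ P₂ hP₁ hP₂,
   aux_PQ_zero X Φ E Q₂ Q₁ hR₂ hR₁ h21 P₂ P₁ hP₂ hP₁⟩
end

section
/- Let X be a nonempty compact subset of ℂ, Φ a representation of R(X) on a complex Hilbert space H, and (μ_{f,g})_{f,g ∈ H} a system of elementary spectral measures of Φ. Let (Q_α)_{α ∈ ι} be a family of pairwise commuting continuous linear projections on M(X), each having property R, with Q_α Q_β = 0 for α ≠ β, and let Q₀ be a continuous linear projection on M(X) with property R, commuting with every Q_α, with Q₀ Q_α = 0 for all α, and such that for every L ∈ M(X) the family (Q_α L)_α is summable in M(X) with Σ_α Q_α L + Q₀ L = L. For each α let P_α ∈ B(H) be the operator with ⟨P_α f, g⟩ = (Q_α μ_{f,g})(1) and let P₀ ∈ B(H) satisfy ⟨P₀ f, g⟩ = (Q₀ μ_{f,g})(1). Then there exists an invertible operator S ∈ B(H) (with bounded inverse) such that: each S⁻¹ P_α S and S⁻¹ P₀ S is a self-adjoint projection; these projections are pairwise orthogonal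 (products zero); for every f ∈ H the family (S⁻¹ P_α S f)_α is summable with Σ_α S⁻¹ P_α S f + S⁻¹ P₀ S f = f; and for every u ∈ R(X), the operator S⁻¹ Φ(u) S commutes with every S⁻¹ P_α S and with S⁻¹ P₀ S. -/
open scoped InnerProductSpace ComplexConjugate

/-!
`P₀` is treated as one more member of the family, indexed by `none : Option ι`.

Property R makes `Q ↦ P_Q` multiplicative and lets every `P_Q` commute with `Φ`, so the `P_i`
are idempotents with `P_i P_j = 0` for `i ≠ j` whose sum converges weakly to the identity.
By Banach–Steinhaus the partial sums `∑_{i ∈ s} P_i` are uniformly bounded, and averaging over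
signs (parallelogram law) gives the square-function estimate `∑ ‖P_i f‖² ≤ C ‖f‖²`, for the
`P_i` and for their adjoints. Hence `V f = (P_i f)_i` is a bounded map into `ℓ²`, and
`‖f‖² = ⟪W f, V f⟫`, with `W` built from the adjoints, shows that `V` is bounded below. The
Gram operator `T = V†V` is then positive and invertible with `T P_j = P_j† T`, so conjugation
by `√T` turns every `P_i` into a self-adjoint projection.
-/

open ContinuousLinearMap

section SignedSums

variable {𝕜 E ι : Type*} [RCLike 𝕜] [NormedAddCommGroup E] [InnerProductSpace 𝕜 E]

/-- By the parallelogram law, one of the two signs of `x a` gives `‖y ± x a‖² ≥ ‖y‖² + ‖x a‖²`. -/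
theorem norm_sq_add_sum_norm_sq_le_of_forall_signs {x : ι → E} {M : ℝ} (s : Finset ι) (y : E)
    (h : ∀ ε : ι → 𝕜, (∀ i, ε i = 1 ∨ ε i = -1) → ‖y + ∑ i ∈ s, ε i • x i‖ ≤ M) :
    ‖y‖ ^ 2 + ∑ i ∈ s, ‖x i‖ ^ 2 ≤ M ^ 2 := by
  classical
  induction s using Finset.induction_on generalizing y with
  | empty =>
    simpa using pow_le_pow_left₀ (norm_nonneg y) (by simpa using h 1 fun _ => Or.inl rfl) 2
  | insert a s ha ih =>
    have key : ∀ c : 𝕜, (c = 1 ∨ c = -1) →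
        ‖y + c • x a‖ ^ 2 + ∑ i ∈ s, ‖x i‖ ^ 2 ≤ M ^ 2 := by
      intro c hc
      refine ih _ fun ε hε => ?_
      have hε' : ∀ i, Function.update ε a c i = 1 ∨ Function.update ε a c i = -1 := by
        intro i
        rw [Function.update_apply]
        split_ifs
        exacts [hc, hε i]
      have hs : ∑ i ∈ s, Function.update ε a c i • x i = ∑ i ∈ s, ε i • x i :=
        Finset.sum_congr rfl fun i hi => by rw [Function.update_of_ne (ne_of_mem_of_not_mem hi ha)]
      simpa [Finset.sum_insert ha, hs, add_assoc] using h _ hε'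
    have hpar := parallelogram_law_with_norm 𝕜 y (x a)
    have h₁ := key 1 (Or.inl rfl)
    have h₂ := key (-1) (Or.inr rfl)
    rw [one_smul] at h₁
    rw [neg_one_smul, ← sub_eq_add_neg] at h₂
    rw [Finset.sum_insert ha]
    nlinarith

theorem norm_sum_smul_le_of_signs {F : Type*} [SeminormedAddCommGroup F] [NormedSpace 𝕜 F]
    {x : ι → F} {K : ℝ} (hK : ∀ s : Finset ι, ‖∑ i ∈ s, x i‖ ≤ K) (s : Finset ι)
    {ε : ι → 𝕜} (hε : ∀ i, ε i = 1 ∨ ε i = -1) : ‖∑ i ∈ s, ε i • x i‖ ≤ 2 * K := by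
  classical
  have hpos : ∑ i ∈ s with ε i = 1, ε i • x i = ∑ i ∈ s with ε i = 1, x i :=
    Finset.sum_congr rfl fun i hi => by rw [(Finset.mem_filter.1 hi).2, one_smul]
  have hneg : ∑ i ∈ s with ¬ε i = 1, ε i • x i = -∑ i ∈ s with ¬ε i = 1, x i := by
    rw [← Finset.sum_neg_distrib]
    refine Finset.sum_congr rfl fun i hi => ?_
    rw [(hε i).resolve_left (Finset.mem_filter.1 hi).2, neg_one_smul]
  rw [← Finset.sum_filter_add_sum_filter_not s (fun i => ε i = 1), hpos, hneg, two_mul]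
  exact (norm_add_le _ _).trans (add_le_add (hK _) ((norm_neg _).trans_le (hK _)))

end SignedSums

section WeakSums

variable {𝕜 E ι : Type*} [RCLike 𝕜] [NormedAddCommGroup E] [InnerProductSpace 𝕜 E]
  [CompleteSpace E]

theorem exists_norm_le_of_forall_norm_inner_le {κ : Type*} {A : κ → E →L[𝕜] E}
    (h : ∀ f g, ∃ C, ∀ k, ‖⟪g, A k f⟫_𝕜‖ ≤ C) : ∃ C, ∀ k, ‖A k‖ ≤ C :=
  banach_steinhaus fun f => by
    obtain ⟨C, hC⟩ := banach_steinhaus (g := fun k => innerSL 𝕜 (A k f)) fun g => by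
      obtain ⟨C, hC⟩ := h f g
      exact ⟨C, fun k => by rw [innerSL_apply_apply, norm_inner_symm]; exact hC k⟩
    exact ⟨C, fun k => by simpa only [innerSL_apply_norm] using hC k⟩

theorem exists_norm_sum_le_of_summable_inner {P : ι → E →L[𝕜] E}
    (h : ∀ f g, Summable fun i => ⟪g, P i f⟫_𝕜) : ∃ K, ∀ s : Finset ι, ‖∑ i ∈ s, P i‖ ≤ K :=
  exists_norm_le_of_forall_norm_inner_le fun f g =>
    ⟨∑' i, ‖⟪g, P i f⟫_𝕜‖, fun s => by
      rw [sum_apply, inner_sum]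
      exact (norm_sum_le _ _).trans ((h f g).norm.sum_le_tsum s fun _ _ => norm_nonneg _)⟩

theorem exists_sum_norm_sq_le_of_summable_inner {P : ι → E →L[𝕜] E}
    (h : ∀ f g, Summable fun i => ⟪g, P i f⟫_𝕜) :
    ∃ C, ∀ f (s : Finset ι), ∑ i ∈ s, ‖P i f‖ ^ 2 ≤ (C * ‖f‖) ^ 2 := by
  obtain ⟨K, hK⟩ := exists_norm_sum_le_of_summable_inner h
  refine ⟨2 * K, fun f s => ?_⟩
  have hsigns : ∀ ε : ι → 𝕜, (∀ i, ε i = 1 ∨ ε i = -1) →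
      ‖0 + ∑ i ∈ s, ε i • P i f‖ ≤ 2 * K * ‖f‖ := fun ε hε =>
    calc ‖0 + ∑ i ∈ s, ε i • P i f‖ = ‖(∑ i ∈ s, ε i • P i) f‖ := by simp [sum_apply, smul_apply]
      _ ≤ ‖∑ i ∈ s, ε i • P i‖ * ‖f‖ := le_opNorm _ f
      _ ≤ 2 * K * ‖f‖ := by gcongr; exact norm_sum_smul_le_of_signs hK s hε
  simpa using norm_sq_add_sum_norm_sq_le_of_forall_signs s 0 hsigns

end WeakSums

section AnalysisOperator

variable {𝕜 E ι : Type*} [RCLike 𝕜] [NormedAddCommGroup E] [InnerProductSpace 𝕜 E]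

theorem exists_lp_two_apply_of_sum_norm_sq_le {P : ι → E →L[𝕜] E} {C : ℝ}
    (hC : ∀ f (s : Finset ι), ∑ i ∈ s, ‖P i f‖ ^ 2 ≤ (C * ‖f‖) ^ 2) :
    ∃ V : E →L[𝕜] lp (fun _ : ι => E) 2, ∀ f i, V f i = P i f := by
  have hmem : ∀ f, Memℓp (fun i => P i f) 2 := fun f =>
    memℓp_gen' (C := (C * ‖f‖) ^ 2) (by simpa using hC f)
  let V : E →ₗ[𝕜] lp (fun _ : ι => E) 2 :=
    { toFun f := ⟨fun i => P i f, hmem f⟩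
      map_add' f g := by ext i; exact map_add (P i) f g
      map_smul' c f := by ext i; simp }
  refine ⟨V.mkContinuous |C| fun f => ?_, fun _ _ => rfl⟩
  refine lp.norm_le_of_forall_sum_le (by norm_num) (by positivity) fun s => ?_
  simpa [V, mul_pow] using hC f s

variable [CompleteSpace E]

theorem exists_lp_two_apply_of_summable_inner {P : ι → E →L[𝕜] E}
    (h : ∀ f g, Summable fun i => ⟪g, P i f⟫_𝕜) :
    ∃ V : E →L[𝕜] lp (fun _ : ι => E) 2, ∀ f i, V f i = P i f :=
  let ⟨_, hC⟩ := exists_sum_norm_sq_le_of_summable_inner h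
  exists_lp_two_apply_of_sum_norm_sq_le hC

end AnalysisOperator

section UnitConjugation

variable {R : Type*} [Monoid R]

theorem Units.conj_mul_conj (u : Rˣ) (a b : R) :
    ↑u * a * ↑u⁻¹ * (↑u * b * ↑u⁻¹) = ↑u * (a * b) * ↑u⁻¹ := by
  simp [mul_assoc]

theorem Commute.units_conj {a b : R} (h : Commute a b) (u : Rˣ) :
    Commute (↑u * a * ↑u⁻¹) (↑u * b * ↑u⁻¹) := by
  rw [Commute, SemiconjBy, Units.conj_mul_conj, Units.conj_mul_conj, h.eq]

theorem IsIdempotentElem.units_conj {p : R} (h : IsIdempotentElem p) (u : Rˣ) :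
    IsIdempotentElem (↑u * p * ↑u⁻¹) := by
  rw [IsIdempotentElem, Units.conj_mul_conj, h.eq]

variable [StarMul R]

theorem IsSelfAdjoint.units_inv {u : Rˣ} (hu : IsSelfAdjoint (u : R)) :
    IsSelfAdjoint (↑u⁻¹ : R) :=
  Units.eq_inv_of_mul_eq_one_left <| by
    rw [← hu.star_eq, ← star_mul, Units.inv_mul, star_one]

/-- `u p u⁻¹ = u⁻¹ (u u p) u⁻¹` is a star-conjugate of `u u p`. -/
theorem IsSelfAdjoint.units_conj_of_mul_self_mul {u : Rˣ} (hu : IsSelfAdjoint (u : R)) {p : R}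
    (h : IsSelfAdjoint (↑u * ↑u * p)) : IsSelfAdjoint (↑u * p * ↑u⁻¹) := by
  convert h.conjugate (↑u⁻¹ : R) using 1
  rw [hu.units_inv.star_eq]
  simp [mul_assoc]

end UnitConjugation

section Similarity

variable {𝕜 H ι : Type*} [RCLike 𝕜] [NormedAddCommGroup H] [InnerProductSpace 𝕜 H]

theorem summable_inner_adjoint [CompleteSpace H] {P : ι → H →L[𝕜] H}
    (h : ∀ f g, Summable fun i => ⟪g, P i f⟫_𝕜) (f g : H) :
    Summable fun i => ⟪g, adjoint (P i) f⟫_𝕜 :=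
  (h g f).star.congr fun i => by simp [adjoint_inner_right]

/-- `⟪V†V P_j f, g⟫ = ⟪P_j f, P_j g⟫`. -/
theorem isSelfAdjoint_adjoint_comp_mul [CompleteSpace H] {P : ι → H →L[𝕜] H}
    (hidem : ∀ i, IsIdempotentElem (P i)) (horth : ∀ i j, i ≠ j → P i * P j = 0)
    {V : H →L[𝕜] lp (fun _ : ι => H) 2} (hV : ∀ f i, V f i = P i f) (j : ι) :
    IsSelfAdjoint (adjoint V ∘L V * P j) := by
  have key : ∀ f g, ⟪(adjoint V ∘L V * P j) f, g⟫_𝕜 = ⟪P j f, P j g⟫_𝕜 := by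
    intro f g
    rw [mul_apply_eq_comp, comp_apply, adjoint_inner_left, lp.inner_eq_tsum]
    refine (tsum_eq_single j fun i hij => ?_).trans ?_
    · rw [hV, hV, ← mul_apply_eq_comp, horth i j hij, zero_apply, inner_zero_left]
    · rw [hV, hV, ← mul_apply_eq_comp, (hidem j).eq]
  rw [isSelfAdjoint_iff_isSymmetric]
  intro f g
  simp only [coe_coe]
  rw [key, ← inner_conj_symm f, key, inner_conj_symm]

theorem inner_self_eq_inner_lp_two {P : ι → H →L[𝕜] H} [CompleteSpace H]
    (hidem : ∀ i, IsIdempotentElem (P i)) (hsum : ∀ f g, HasSum (fun i => ⟪g, P i f⟫_𝕜) ⟪g, f⟫_𝕜)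
    {V W : H →L[𝕜] lp (fun _ : ι => H) 2} (hV : ∀ f i, V f i = P i f)
    (hW : ∀ f i, W f i = adjoint (P i) f) (f : H) : ⟪f, f⟫_𝕜 = ⟪W f, V f⟫_𝕜 := by
  rw [lp.inner_eq_tsum, ← (hsum f f).tsum_eq]
  refine tsum_congr fun i => ?_
  rw [hV, hW, adjoint_inner_left, ← mul_apply_eq_comp, (hidem i).eq]

theorem norm_le_opNorm_mul_norm_lp_two {P : ι → H →L[𝕜] H} [CompleteSpace H]
    (hidem : ∀ i, IsIdempotentElem (P i)) (hsum : ∀ f g, HasSum (fun i => ⟪g, P i f⟫_𝕜) ⟪g, f⟫_𝕜)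
    {V W : H →L[𝕜] lp (fun _ : ι => H) 2} (hV : ∀ f i, V f i = P i f)
    (hW : ∀ f i, W f i = adjoint (P i) f) (f : H) : ‖f‖ ≤ ‖W‖ * ‖V f‖ := by
  rcases eq_or_ne f 0 with rfl | hf
  · simp
  refine le_of_mul_le_mul_right ?_ (norm_pos_iff.2 hf)
  calc ‖f‖ * ‖f‖ = ‖⟪W f, V f⟫_𝕜‖ := by
        rw [← inner_self_eq_inner_lp_two hidem hsum hV hW, inner_self_eq_norm_sq_to_K]; simp [sq]
    _ ≤ ‖W f‖ * ‖V f‖ := norm_inner_le_norm _ _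
    _ ≤ ‖W‖ * ‖f‖ * ‖V f‖ := by gcongr; exact le_opNorm W f
    _ = ‖W‖ * ‖V f‖ * ‖f‖ := by ring

end Similarity

section ComplexSimilarity

variable {H ι : Type*} [NormedAddCommGroup H] [InnerProductSpace ℂ H] [CompleteSpace H]

theorem exists_unit_isStarProjection_conj {P : ι → H →L[ℂ] H}
    (hidem : ∀ i, IsIdempotentElem (P i)) (horth : ∀ i j, i ≠ j → P i * P j = 0)
    (hsum : ∀ f g, HasSum (fun i => ⟪g, P i f⟫_ℂ) ⟪g, f⟫_ℂ) :
    ∃ u : (H →L[ℂ] H)ˣ, ∀ i, IsStarProjection (↑u * P i * ↑u⁻¹) := by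
  have hsummable f g := (hsum f g).summable
  obtain ⟨V, hV⟩ := exists_lp_two_apply_of_summable_inner hsummable
  obtain ⟨W, hW⟩ := exists_lp_two_apply_of_summable_inner (summable_inner_adjoint hsummable)
  set T := adjoint V ∘L V
  have hT : 0 ≤ T := (nonneg_iff_isPositive _).2 (isPositive_adjoint_comp_self V)
  have hTunit : IsUnit T := by
    refine isUnit_of_forall_le_norm_inner_map T (c := (‖W‖₊ ^ 2 + 1)⁻¹) (by positivity) fun f => ?_
    have hf := norm_le_opNorm_mul_norm_lp_two hidem hsum hV hW f
    have hTf : ‖⟪T f, f⟫_ℂ‖ = ‖V f‖ ^ 2 := by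
      rw [comp_apply, adjoint_inner_left, inner_self_eq_norm_sq_to_K]; simp
    rw [hTf, NNReal.coe_inv, mul_inv_le_iff₀ (by positivity)]
    push_cast
    nlinarith [mul_le_mul hf hf (norm_nonneg f) (by positivity), sq_nonneg ‖V f‖]
  obtain ⟨u, hu⟩ := (CFC.isUnit_sqrt_iff T).2 hTunit
  have hu_sa : IsSelfAdjoint (u : H →L[ℂ] H) := hu ▸ (CFC.sqrt_nonneg T).isSelfAdjoint
  have huu : (u : H →L[ℂ] H) * u = T := by rw [hu, CFC.sqrt_mul_sqrt_self T]
  refine ⟨u, fun i => ⟨(hidem i).units_conj u, hu_sa.units_conj_of_mul_self_mul ?_⟩⟩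
  rw [huu]
  exact isSelfAdjoint_adjoint_comp_mul hidem horth hV i

end ComplexSimilarity

section OrthogonalDecomposition

variable {𝕜 H ι : Type*} [RCLike 𝕜] [NormedAddCommGroup H] [InnerProductSpace 𝕜 H]

theorem hasSum_inner_units_conj {P : ι → H →L[𝕜] H} [CompleteSpace H]
    (hsum : ∀ f g, HasSum (fun i => ⟪g, P i f⟫_𝕜) ⟪g, f⟫_𝕜) (u : (H →L[𝕜] H)ˣ) (f g : H) :
    HasSum (fun i => ⟪g, (↑u * P i * ↑u⁻¹) f⟫_𝕜) ⟪g, f⟫_𝕜 := by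
  have hu : (u : H →L[𝕜] H) ((↑u⁻¹ : H →L[𝕜] H) f) = f := by
    rw [← mul_apply_eq_comp, u.mul_inv, one_apply_eq_self]
  simpa only [mul_apply_eq_comp, adjoint_inner_left, hu] using
    hsum ((↑u⁻¹ : H →L[𝕜] H) f) (adjoint (u : H →L[𝕜] H) g)

/-- The vectors `R i f` are pairwise orthogonal with `∑ ‖R i f‖² = ‖f‖²`, so they are summable;
the weak limit identifies the sum. -/
theorem hasSum_apply_of_isStarProjection [CompleteSpace H] {R : ι → H →L[𝕜] H}
    (hR : ∀ i, IsStarProjection (R i)) (horth : ∀ i j, i ≠ j → R i * R j = 0)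
    (hsum : ∀ f g, HasSum (fun i => ⟪g, R i f⟫_𝕜) ⟪g, f⟫_𝕜) (f : H) :
    HasSum (fun i => R i f) f := by
  have hinner : ∀ i a b, ⟪R i a, b⟫_𝕜 = ⟪a, R i b⟫_𝕜 := fun i =>
    isSelfAdjoint_iff_isSymmetric.1 (hR i).isSelfAdjoint
  have hfam : OrthogonalFamily 𝕜 (fun i => (R i).range) fun i => (R i).range.subtypeₗᵢ := by
    refine orthogonalFamily_iff_pairwise.2 fun i j hij => Submodule.isOrtho_iff_inner_eq.2 ?_
    rintro _ ⟨a, rfl⟩ _ ⟨b, rfl⟩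
    rw [coe_coe, coe_coe, hinner, ← mul_apply_eq_comp, horth i j hij, zero_apply, inner_zero_right]
  have hnorm : ∀ i, ‖R i f‖ ^ 2 = RCLike.re ⟪f, R i f⟫_𝕜 := fun i => by
    rw [← inner_self_eq_norm_sq (𝕜 := 𝕜), hinner, ← mul_apply_eq_comp,
      (hR i).isIdempotentElem.eq]
  obtain ⟨s, hs⟩ := (hfam.summable_iff_norm_sq_summable fun i => ⟨R i f, f, rfl⟩).2 <| by
    simpa only [Submodule.coe_norm, hnorm, RCLike.reCLM_apply] using
      ((hsum f f).mapL RCLike.reCLM).summable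
  replace hs : HasSum (fun i => R i f) s := hs
  obtain rfl : f = s := ext_inner_left 𝕜 fun g => (hsum f g).unique (hs.mapL (innerSL 𝕜 g))
  exact hs

end OrthogonalDecomposition

theorem hasSum_option_iff {G ι : Type*} [AddCommGroup G] [TopologicalSpace G]
    [IsTopologicalAddGroup G] {f : Option ι → G} {a : G} :
    HasSum f a ↔ HasSum (fun i => f (some i)) (a - f none) := by
  classical
  set g := Function.update f none 0
  have hg : HasSum g (a - f none) ↔ HasSum (fun i => f (some i)) (a - f none) := by
    refine (Option.some_injective ι |>.hasSum_iff fun o ho => ?_).symm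
    cases o with
    | none => exact Function.update_self ..
    | some i => exact absurd ⟨i, rfl⟩ ho
  refine Iff.trans ⟨fun h => ?_, fun h => ?_⟩ hg
  · simpa [sub_eq_neg_add] using h.update none 0
  · simpa [g] using h.update none (f none)

theorem cdot_apply {X : Set ℂ} [CompactSpace X] (u : C(X, ℂ)) (L : MX X) (v : C(X, ℂ)) :
    cdot X u L v = L (u * v) :=
  rfl

namespace HasPropertyR

variable {X : Set ℂ} [CompactSpace X] {Q : MX X →L[ℂ] MX X}

theorem apply_eq_of_eqOn (hQ : HasPropertyR X Q) {L₁ L₂ : MX X}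
    (h : ∀ v : RX X, L₁ v = L₂ v) (v : RX X) : Q L₁ v = Q L₂ v := by
  rw [← sub_eq_zero, ← sub_apply, ← map_sub]
  exact hQ.1 _ (fun w => by rw [sub_apply, h, sub_self]) v

theorem apply_one_eq_of_eqOn_cdot (hQ : HasPropertyR X Q) {L L' : MX X} {u : RX X}
    (h : ∀ v : RX X, L v = cdot X u L' v) : Q L 1 = Q L' u := by
  simpa [hQ.2, cdot_apply] using hQ.apply_eq_of_eqOn h 1

end HasPropertyR

namespace ElemSpectralMeasures

variable {X : Set ℂ} [CompactSpace X] {H : Type*} [NormedAddCommGroup H]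
  [InnerProductSpace ℂ H] {Φ : RX X →ₐ[ℂ] (H →L[ℂ] H)}
  (E : ElemSpectralMeasures X Φ)

theorem μ_apply_one (f g : H) : E.μ f g 1 = ⟪g, f⟫_ℂ := by
  simpa using E.repr 1 f g

theorem μ_map_left (u v : RX X) (f g : H) : E.μ (Φ u f) g v = cdot X u (E.μ f g) v := by
  rw [cdot_apply, ← Subalgebra.coe_mul, E.repr, E.repr, mul_comm, map_mul, mul_apply_eq_comp]

def Induces (Q : MX X →L[ℂ] MX X) (B : H →L[ℂ] H) : Prop :=
  ∀ f g, ⟪g, B f⟫_ℂ = Q (E.μ f g) 1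

variable {E}

theorem induces_zero : E.Induces 0 0 := fun f g => by simp

theorem Induces.unique {Q : MX X →L[ℂ] MX X} {B B' : H →L[ℂ] H} (hB : E.Induces Q B)
    (hB' : E.Induces Q B') : B = B' :=
  ext fun f => ext_inner_left ℂ fun g => by rw [hB, hB']

variable [CompleteSpace H]

variable (E) in
theorem μ_adjoint_right (u v : RX X) (f g : H) :
    E.μ f (adjoint (Φ u) g) v = cdot X u (E.μ f g) v := by
  rw [cdot_apply, ← Subalgebra.coe_mul, E.repr, E.repr, adjoint_inner_left, map_mul,
    mul_apply_eq_comp]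

variable {Q Q' : MX X →L[ℂ] MX X} {B B' : H →L[ℂ] H}

theorem Induces.commute (hQ : HasPropertyR X Q) (hB : E.Induces Q B) (u : RX X) :
    Commute B (Φ u) :=
  ext fun f => ext_inner_left ℂ fun g => by
    rw [mul_apply_eq_comp, mul_apply_eq_comp, hB, ← adjoint_inner_left, hB,
      hQ.apply_one_eq_of_eqOn_cdot (E.μ_map_left u · f g),
      hQ.apply_one_eq_of_eqOn_cdot (E.μ_adjoint_right u · f g)]

theorem Induces.μ_apply (hQ : HasPropertyR X Q) (hB : E.Induces Q B) (f g : H) (v : RX X) :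
    E.μ (B f) g v = Q (E.μ f g) v := by
  rw [E.repr, ← mul_apply_eq_comp, ← (hB.commute hQ v).eq, mul_apply_eq_comp, hB,
    hQ.apply_one_eq_of_eqOn_cdot (E.μ_map_left v · f g)]

theorem Induces.mul (hQ : HasPropertyR X Q) (hQ' : HasPropertyR X Q') (hB : E.Induces Q B)
    (hB' : E.Induces Q' B') : E.Induces (Q ∘L Q') (B * B') := fun f g => by
  rw [mul_apply_eq_comp, hB, comp_apply]
  exact hQ.apply_eq_of_eqOn (hB'.μ_apply hQ' f g) 1

theorem exists_unit_conj_orthogonal_decomposition {κ : Type*} {Q : κ → MX X →L[ℂ] MX X}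
    (hR : ∀ i, HasPropertyR X (Q i)) (hidem : ∀ i, Q i ∘L Q i = Q i)
    (horth : ∀ i j, i ≠ j → Q i ∘L Q j = 0) (hsum : ∀ L, HasSum (fun i => Q i L) L)
    {P : κ → H →L[ℂ] H} (hP : ∀ i, E.Induces (Q i) (P i)) :
    ∃ w : (H →L[ℂ] H)ˣ, (∀ i, IsStarProjection (↑w * P i * ↑w⁻¹)) ∧
      (∀ i j, i ≠ j → ↑w * P i * ↑w⁻¹ * (↑w * P j * ↑w⁻¹) = 0) ∧
      (∀ f, HasSum (fun i => (↑w * P i * ↑w⁻¹) f) f) ∧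
      ∀ (u : RX X) i, Commute (↑w * Φ u * ↑w⁻¹) (↑w * P i * ↑w⁻¹) := by
  have hPidem : ∀ i, IsIdempotentElem (P i) := fun i => by
    have h := (hP i).mul (hR i) (hR i) (hP i)
    rw [hidem i] at h
    exact h.unique (hP i)
  have hPorth : ∀ i j, i ≠ j → P i * P j = 0 := fun i j hij => by
    have h := (hP i).mul (hR i) (hR j) (hP j)
    rw [horth i j hij] at h
    exact h.unique induces_zero
  have hPsum : ∀ f g, HasSum (fun i => ⟪g, P i f⟫_ℂ) ⟪g, f⟫_ℂ := fun f g => by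
    simpa only [hP _ f g, E.μ_apply_one, apply_apply] using
      (hsum (E.μ f g)).mapL (ContinuousLinearMap.apply ℂ ℂ (1 : C(X, ℂ)))
  obtain ⟨w, hw⟩ := exists_unit_isStarProjection_conj hPidem hPorth hPsum
  have hwOrth : ∀ i j, i ≠ j → ↑w * P i * ↑w⁻¹ * (↑w * P j * ↑w⁻¹) = 0 := fun i j hij => by
    rw [Units.conj_mul_conj, hPorth i j hij, mul_zero, zero_mul]
  exact ⟨w, hw, hwOrth,
    hasSum_apply_of_isStarProjection hw hwOrth (hasSum_inner_units_conj hPsum w),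
    fun u i => ((hP i).commute (hR i) u).symm.units_conj w⟩

end ElemSpectralMeasures

theorem similarity_orthogonal_decomposition_general
    (X : Set ℂ) [CompactSpace X]
    {H : Type*} [NormedAddCommGroup H] [InnerProductSpace ℂ H] [CompleteSpace H]
    (Φ : RX X →ₐ[ℂ] (H →L[ℂ] H)) (E : ElemSpectralMeasures X Φ)
    {ι : Type*} (Q : ι → (MX X →L[ℂ] MX X)) (Q₀ : MX X →L[ℂ] MX X)
    (hidem : ∀ α, Q α ∘L Q α = Q α) (hidem₀ : Q₀ ∘L Q₀ = Q₀)
    (hR : ∀ α, HasPropertyR X (Q α)) (hR₀ : HasPropertyR X Q₀)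
    (hcomm₀ : ∀ α, Q α ∘L Q₀ = Q₀ ∘L Q α)
    (horth : ∀ α β, α ≠ β → Q α ∘L Q β = 0)
    (horth₀ : ∀ α, Q₀ ∘L Q α = 0)
    (hsum : ∀ L : MX X, HasSum (fun α => Q α L) (L - Q₀ L))
    (P : ι → (H →L[ℂ] H)) (P₀ : H →L[ℂ] H)
    (hP : ∀ (α) (f g : H), ⟪g, P α f⟫_ℂ = Q α (E.μ f g) (1 : C(X, ℂ)))
    (hP₀ : ∀ f g : H, ⟪g, P₀ f⟫_ℂ = Q₀ (E.μ f g) (1 : C(X, ℂ))) :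
    ∃ S S' : H →L[ℂ] H, S ∘L S' = 1 ∧ S' ∘L S = 1 ∧
      (∀ α, IsSelfAdjoint (S' ∘L P α ∘L S) ∧
        (S' ∘L P α ∘L S) ∘L (S' ∘L P α ∘L S) = S' ∘L P α ∘L S) ∧
      (IsSelfAdjoint (S' ∘L P₀ ∘L S) ∧
        (S' ∘L P₀ ∘L S) ∘L (S' ∘L P₀ ∘L S) = S' ∘L P₀ ∘L S) ∧
      (∀ α β, α ≠ β → (S' ∘L P α ∘L S) ∘L (S' ∘L P β ∘L S) = 0) ∧
      (∀ α, (S' ∘L P α ∘L S) ∘L (S' ∘L P₀ ∘L S) = 0 ∧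
        (S' ∘L P₀ ∘L S) ∘L (S' ∘L P α ∘L S) = 0) ∧
      (∀ f : H, HasSum (fun α => (S' ∘L P α ∘L S) f) (f - (S' ∘L P₀ ∘L S) f)) ∧
      (∀ (u : RX X) (α), (S' ∘L Φ u ∘L S) ∘L (S' ∘L P α ∘L S)
          = (S' ∘L P α ∘L S) ∘L (S' ∘L Φ u ∘L S)) ∧
      (∀ u : RX X, (S' ∘L Φ u ∘L S) ∘L (S' ∘L P₀ ∘L S)
          = (S' ∘L P₀ ∘L S) ∘L (S' ∘L Φ u ∘L S)) := by
  let Q' : Option ι → MX X →L[ℂ] MX X := fun o => o.elim Q₀ Q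
  let P' : Option ι → H →L[ℂ] H := fun o => o.elim P₀ P
  have hR' : ∀ o, HasPropertyR X (Q' o) := by rintro (_ | α); exacts [hR₀, hR α]
  have hidem' : ∀ o, Q' o ∘L Q' o = Q' o := by rintro (_ | α); exacts [hidem₀, hidem α]
  have horth' : ∀ o o', o ≠ o' → Q' o ∘L Q' o' = 0 := by
    rintro (_ | α) (_ | β) h
    exacts [absurd rfl h, horth₀ β, (hcomm₀ α).trans (horth₀ α),
      horth α β (Option.some_injective _ |>.ne_iff.1 h)]
  have hP' : ∀ o, E.Induces (Q' o) (P' o) := by rintro (_ | α); exacts [hP₀, hP α]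
  obtain ⟨w, hproj, hwOrth, hwSum, hwComm⟩ :=
    E.exists_unit_conj_orthogonal_decomposition hR' hidem' horth'
      (fun L => hasSum_option_iff.2 (hsum L)) hP'
  refine ⟨↑w⁻¹, ↑w, w.inv_mul, w.mul_inv, ?_⟩
  simp only [← mul_def, ← mul_assoc]
  exact ⟨fun α => ⟨(hproj (some α)).isSelfAdjoint, (hproj (some α)).isIdempotentElem⟩,
    ⟨(hproj none).isSelfAdjoint, (hproj none).isIdempotentElem⟩,
    fun α β h => hwOrth _ _ (Option.some_injective _ |>.ne h),
    fun α => ⟨hwOrth _ _ (Option.some_ne_none α), hwOrth _ _ (Option.some_ne_none α).symm⟩,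
    fun f => hasSum_option_iff.1 (hwSum f), fun u α => (hwComm u (some α)).eq,
    fun u => (hwComm u none).eq⟩

/-- The similarity orthogonal–decomposition theorem: given a family `(Q_α)` of pairwise
commuting, mutually annihilating projections on `M(X)` with property R, together with `Q₀`
completing them to a decomposition of the identity, the associated operators `P_α, P₀` on `H`
are simultaneously similar, via a single invertible `S`, to pairwise orthogonal self-adjoint
projections summing to the identity and commuting with `S⁻¹Φ(u)S`. -/
theorem similarity_orthogonal_decomposition
    (X : Set ℂ) [CompactSpace X] (hX : X.Nonempty)
    {H : Type*} [NormedAddCommGroup H] [InnerProductSpace ℂ H] [CompleteSpace H]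
    (Φ : RX X →ₐ[ℂ] (H →L[ℂ] H)) (E : ElemSpectralMeasures X Φ)
    {ι : Type*} (Q : ι → (MX X →L[ℂ] MX X)) (Q₀ : MX X →L[ℂ] MX X)
    (hidem : ∀ α, Q α ∘L Q α = Q α) (hidem₀ : Q₀ ∘L Q₀ = Q₀)
    (hR : ∀ α, HasPropertyR X (Q α)) (hR₀ : HasPropertyR X Q₀)
    (hcomm : ∀ α β, Q α ∘L Q β = Q β ∘L Q α)
    (hcomm₀ : ∀ α, Q α ∘L Q₀ = Q₀ ∘L Q α)
    (horth : ∀ α β, α ≠ β → Q α ∘L Q β = 0)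
    (horth₀ : ∀ α, Q₀ ∘L Q α = 0)
    (hsum : ∀ L : MX X, HasSum (fun α => Q α L) (L - Q₀ L))
    (P : ι → (H →L[ℂ] H)) (P₀ : H →L[ℂ] H)
    (hP : ∀ (α) (f g : H), ⟪g, P α f⟫_ℂ = Q α (E.μ f g) (1 : C(X, ℂ)))
    (hP₀ : ∀ f g : H, ⟪g, P₀ f⟫_ℂ = Q₀ (E.μ f g) (1 : C(X, ℂ))) :
    ∃ S S' : H →L[ℂ] H, S ∘L S' = 1 ∧ S' ∘L S = 1 ∧
      (∀ α, IsSelfAdjoint (S' ∘L P α ∘L S) ∧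
        (S' ∘L P α ∘L S) ∘L (S' ∘L P α ∘L S) = S' ∘L P α ∘L S) ∧
      (IsSelfAdjoint (S' ∘L P₀ ∘L S) ∧
        (S' ∘L P₀ ∘L S) ∘L (S' ∘L P₀ ∘L S) = S' ∘L P₀ ∘L S) ∧
      (∀ α β, α ≠ β → (S' ∘L P α ∘L S) ∘L (S' ∘L P β ∘L S) = 0) ∧
      (∀ α, (S' ∘L P α ∘L S) ∘L (S' ∘L P₀ ∘L S) = 0 ∧
        (S' ∘L P₀ ∘L S) ∘L (S' ∘L P α ∘L S) = 0) ∧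
      (∀ f : H, HasSum (fun α => (S' ∘L P α ∘L S) f) (f - (S' ∘L P₀ ∘L S) f)) ∧
      (∀ (u : RX X) (α), (S' ∘L Φ u ∘L S) ∘L (S' ∘L P α ∘L S)
          = (S' ∘L P α ∘L S) ∘L (S' ∘L Φ u ∘L S)) ∧
      (∀ u : RX X, (S' ∘L Φ u ∘L S) ∘L (S' ∘L P₀ ∘L S)
          = (S' ∘L P₀ ∘L S) ∘L (S' ∘L Φ u ∘L S)) :=
  similarity_orthogonal_decomposition_general X Φ E Q Q₀ hidem hidem₀ hR hR₀ hcomm₀ horth horth₀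
    hsum P P₀ hP hP₀
end

section
/- Let X be a nonempty compact subset of ℂ, Φ a representation of R(X) on a complex Hilbert space H, and (μ_{f,g})_{f,g ∈ H} a system of elementary spectral measures of Φ such that each μ_{f,f} (f ∈ H) is real, i.e. μ_{f,f}(conj(u)) = conj(μ_{f,f}(u)) for all u ∈ C(X, ℂ). Let Q be a continuous linear projection on M(X) having property R such that Q μ_{f,f} is real for every f ∈ H, and let P_Q ∈ B(H) be the operator determined by ⟨P_Q f, g⟩ = (Q μ_{f,g})(1). Then P_Q is a self-adjoint (orthogonal) projection: P_Q² = P_Q and P_Q* = P_Q. -/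
open scoped InnerProductSpace ComplexConjugate

/-- A functional `L ∈ M(X)` is real if `L(conj u) = conj (L u)` for all `u ∈ C(X, ℂ)`. -/
def IsRealFunctional (X : Set ℂ) [CompactSpace X] (L : MX X) : Prop :=
  ∀ u : C(X, ℂ), L (star u) = conj (L u)

/-- If the elementary spectral measures `μ_{f,f}` are real and `Q` is a projection on `M(X)`
with property R such that each `Qμ_{f,f}` is real, then the associated operator `P_Q`
(determined by `⟨P_Q f, g⟩ = (Qμ_{f,g})(1)`) is a self-adjoint (orthogonal) projection. -/
theorem Q_part_selfAdjoint_projection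
    (X : Set ℂ) [CompactSpace X] (hX : X.Nonempty)
    {H : Type*} [NormedAddCommGroup H] [InnerProductSpace ℂ H] [CompleteSpace H]
    (Φ : RX X →ₐ[ℂ] (H →L[ℂ] H)) (E : ElemSpectralMeasures X Φ)
    (hreal : ∀ f : H, IsRealFunctional X (E.μ f f))
    (Q : MX X →L[ℂ] MX X) (hQ : Q ∘L Q = Q) (hQR : HasPropertyR X Q)
    (hQreal : ∀ f : H, IsRealFunctional X (Q (E.μ f f)))
    (PQ : H →L[ℂ] H)
    (hPQ : ∀ f g : H, ⟪g, PQ f⟫_ℂ = Q (E.μ f g) (1 : C(X, ℂ))) :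
    PQ ∘L PQ = PQ ∧ IsSelfAdjoint PQ := by
  classical
  have coe_one : (((1 : RX X) : C(X, ℂ))) = 1 := rfl
  -- Key Lemma A : Qμ_{f,g}(u) = ⟪g, PQ (Φ u f)⟫ for u ∈ R(X)
  have keyA : ∀ (u : RX X) (f g : H),
      Q (E.μ f g) (u : C(X, ℂ)) = ⟪g, PQ ((Φ u) f)⟫_ℂ := by
    intro u f g
    set L : MX X := cdot X (u : C(X, ℂ)) (E.μ f g) - E.μ ((Φ u) f) g with hLdef
    have hL : ∀ v : RX X, L (v : C(X, ℂ)) = 0 := by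
      intro v
      have h1 : cdot X (u : C(X, ℂ)) (E.μ f g) (v : C(X, ℂ))
          = E.μ f g ((u * v : RX X) : C(X, ℂ)) := by
        simp [cdot]
      have h2 : E.μ f g ((u : C(X, ℂ)) * (v : C(X, ℂ))) = ⟪g, (Φ v) ((Φ u) f)⟫_ℂ := by
        rw [← MulMemClass.coe_mul, E.repr (u * v) f g, mul_comm u v, map_mul]; rfl
      have h3 : E.μ ((Φ u) f) g (v : C(X, ℂ)) = ⟪g, (Φ v) ((Φ u) f)⟫_ℂ :=
        E.repr v ((Φ u) f) g
      simp [hLdef, h2, h3, cdot]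
    have hQL := hQR.1 L hL 1
    rw [coe_one] at hQL
    have hmap : Q L = cdot X (u : C(X, ℂ)) (Q (E.μ f g)) - Q (E.μ ((Φ u) f) g) := by
      rw [hLdef, map_sub, hQR.2]
    rw [hmap] at hQL
    have h5 : cdot X (u : C(X, ℂ)) (Q (E.μ f g)) (1 : C(X, ℂ))
        = Q (E.μ f g) (u : C(X, ℂ)) := by
      simp [cdot]
    have h6 : Q (E.μ ((Φ u) f) g) (1 : C(X, ℂ)) = ⟪g, PQ ((Φ u) f)⟫_ℂ :=
      (hPQ ((Φ u) f) g).symm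
    simp only [ContinuousLinearMap.sub_apply] at hQL
    rw [h5, h6] at hQL
    exact sub_eq_zero.mp hQL
  -- Key Lemma B : PQ commutes weakly with Φ u
  have keyB : ∀ (u : RX X) (f g : H),
      ⟪g, PQ ((Φ u) f)⟫_ℂ = ⟪g, (Φ u) (PQ f)⟫_ℂ := by
    intro u f g
    set A := ContinuousLinearMap.adjoint (Φ u) with hA
    set L : MX X := cdot X (u : C(X, ℂ)) (E.μ f g) - E.μ f (A g) with hLdef
    have hL : ∀ v : RX X, L (v : C(X, ℂ)) = 0 := by
      intro v
      have h1 : cdot X (u : C(X, ℂ)) (E.μ f g) (v : C(X, ℂ))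
          = E.μ f g ((u * v : RX X) : C(X, ℂ)) := by
        simp [cdot]
      have h2 : E.μ f g ((u : C(X, ℂ)) * (v : C(X, ℂ))) = ⟪g, (Φ u) ((Φ v) f)⟫_ℂ := by
        rw [← MulMemClass.coe_mul, E.repr (u * v) f g, map_mul]; rfl
      have h3 : E.μ f (A g) (v : C(X, ℂ)) = ⟪g, (Φ u) ((Φ v) f)⟫_ℂ := by
        rw [E.repr v f (A g), hA, ContinuousLinearMap.adjoint_inner_left]
      simp [hLdef, h2, h3, cdot]
    have hQL := hQR.1 L hL 1
    rw [coe_one] at hQL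
    have hmap : Q L = cdot X (u : C(X, ℂ)) (Q (E.μ f g)) - Q (E.μ f (A g)) := by
      rw [hLdef, map_sub, hQR.2]
    rw [hmap] at hQL
    have h5 : cdot X (u : C(X, ℂ)) (Q (E.μ f g)) (1 : C(X, ℂ))
        = Q (E.μ f g) (u : C(X, ℂ)) := by
      simp [cdot]
    have h6 : Q (E.μ f (A g)) (1 : C(X, ℂ)) = ⟪A g, PQ f⟫_ℂ := (hPQ f (A g)).symm
    have h7 : ⟪A g, PQ f⟫_ℂ = ⟪g, (Φ u) (PQ f)⟫_ℂ := by
      rw [hA, ContinuousLinearMap.adjoint_inner_left]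
    simp only [ContinuousLinearMap.sub_apply] at hQL
    rw [h5, h6, h7, keyA u f g] at hQL
    exact sub_eq_zero.mp hQL
  constructor
  · -- idempotence
    ext f
    apply ext_inner_left ℂ
    intro g
    rw [ContinuousLinearMap.comp_apply, hPQ (PQ f) g]
    set L : MX X := E.μ (PQ f) g - Q (E.μ f g) with hLdef
    have hL : ∀ v : RX X, L (v : C(X, ℂ)) = 0 := by
      intro v
      have h1 : E.μ (PQ f) g (v : C(X, ℂ)) = ⟪g, (Φ v) (PQ f)⟫_ℂ := E.repr v (PQ f) g
      have h2 : Q (E.μ f g) (v : C(X, ℂ)) = ⟪g, (Φ v) (PQ f)⟫_ℂ := by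
        rw [keyA v f g, keyB v f g]
      simp [hLdef, h1, h2]
    have hQL := hQR.1 L hL 1
    rw [coe_one] at hQL
    have hQQ : Q (Q (E.μ f g)) = Q (E.μ f g) := by
      have := congrFun (congrArg DFunLike.coe hQ) (E.μ f g)
      simpa using this
    have hmap : Q L = Q (E.μ (PQ f) g) - Q (E.μ f g) := by
      rw [hLdef, map_sub, hQQ]
    rw [hmap] at hQL
    simp only [ContinuousLinearMap.sub_apply] at hQL
    rw [sub_eq_zero.mp hQL, ← hPQ f g]
  · -- self-adjointness
    apply LinearMap.IsSymmetric.isSelfAdjoint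
    rw [LinearMap.isSymmetric_iff_inner_map_self_real]
    intro v
    have hr := hQreal v 1
    rw [star_one] at hr
    have hreal1 : conj (Q (E.μ v v) (1 : C(X, ℂ))) = Q (E.μ v v) (1 : C(X, ℂ)) := hr.symm
    have key : ⟪PQ v, v⟫_ℂ = Q (E.μ v v) (1 : C(X, ℂ)) := by
      rw [← inner_conj_symm, hPQ v v]; exact hreal1
    simp only [ContinuousLinearMap.coe_coe]
    rw [key]; exact hreal1
end
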